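/- Conversely, if F is an n×n complex matrix all of whose eigenvalues have negative real part, then for every Hermitian positive definite Q there exists a Hermitian positive definite P with F†P + PF = -Q. -/

import Mathlib

/-!
For the Cayley transform `A = (1 - F)⁻¹ (1 + F)` and `B = (1 - F)⁻¹` one has
`AᴴXA - X = 2 Bᴴ (FᴴX + XF) B`. An eigenvalue `μ` of `A` comes from the eigenvalue
`(μ - 1) / (μ + 1)` of `F`, whose real part is negative exactly when `‖μ‖ < 1`; so by Gelfand's
formula `Aᵏ → 0`. A solution of `FᴴX + XF = 0` then satisfies `X = (Aᵏ)ᴴ X Aᵏ → 0`, so the Lyapunov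
operator is injective, hence surjective. Its solution `P` of `FᴴP + PF = -Q` satisfies
`P - AᴴPA = 2 BᴴQB > 0`, so `k ↦ (Aᵏx)ᴴ P (Aᵏx)` decreases to `0`, strictly at the first step,
whence `xᴴPx > 0`.
-/

open Filter Topology Matrix
open scoped ComplexOrder

section Cayley

variable {R : Type*} [Ring R]

/-- `Ring.inverse` is `0` on non-units, so the lemmas below assume `IsUnit (1 - f)`. -/
noncomputable def cayley (f : R) : R := Ring.inverse (1 - f) * (1 + f)

lemma star_cayley_mul_mul_cayley_sub [StarRing R] {f : R} (hf : IsUnit (1 - f)) (x : R) :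
    star (cayley f) * x * cayley f - x =
      2 • (star (Ring.inverse (1 - f)) * (star f * x + x * f) * Ring.inverse (1 - f)) := by
  set b := Ring.inverse (1 - f)
  have hb : (1 - f) * b = 1 := Ring.mul_inverse_cancel _ hf
  have hcomm : b * (1 + f) = (1 + f) * b := by
    calc b * (1 + f) = 2 • b - b * (1 - f) := by noncomm_ring
      _ = 2 • b - (1 - f) * b := by rw [Ring.inverse_mul_cancel _ hf, hb]
      _ = (1 + f) * b := by noncomm_ring
  have key : star ((1 + f) * b) * x * ((1 + f) * b) - star ((1 - f) * b) * x * ((1 - f) * b) =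
      2 • (star b * (star f * x + x * f) * b) := by
    simp only [star_mul, star_add, star_sub, star_one]
    noncomm_ring
  rwa [hb, star_one, one_mul, mul_one, ← hcomm] at key

lemma mem_spectrum_of_mem_spectrum_cayley {𝕜 A : Type*} [Field 𝕜] [NeZero (2 : 𝕜)] [Ring A]
    [Algebra 𝕜 A] {f : A} (hf : IsUnit (1 - f)) {μ : 𝕜} (hμ : μ ∈ spectrum 𝕜 (cayley f)) :
    (μ - 1) / (μ + 1) ∈ spectrum 𝕜 f := by
  set b := Ring.inverse (1 - f)
  have hb : IsUnit b := hf.ringInverse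
  have key : algebraMap 𝕜 A μ - cayley f = b * ((μ - 1) • 1 - (μ + 1) • f) := by
    calc algebraMap 𝕜 A μ - cayley f = μ • (b * (1 - f)) - b * (1 + f) := by
          rw [Ring.inverse_mul_cancel _ hf, Algebra.algebraMap_eq_smul_one]; rfl
      _ = _ := by
          simp only [mul_sub, mul_add, mul_smul_comm, mul_one, smul_sub]
          module
  rw [spectrum.mem_iff, key] at hμ
  have hμ1 : μ + 1 ≠ 0 := by
    intro h
    obtain rfl : μ = -1 := eq_neg_of_add_eq_zero_left h
    refine hμ (hb.mul ?_)
    rw [h, zero_smul, sub_zero, ← Algebra.algebraMap_eq_smul_one]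
    exact (IsUnit.mk0 _ (by simp [sub_eq_add_neg, ← neg_add, one_add_one_eq_two, NeZero.ne])).map _
  rw [spectrum.mem_iff, Algebra.algebraMap_eq_smul_one]
  intro hu
  refine hμ (hb.mul ?_)
  rw [← mul_div_cancel₀ (μ - 1) hμ1, ← smul_smul, ← smul_sub, Algebra.smul_def]
  exact ((IsUnit.mk0 _ hμ1).map _).mul hu

lemma Complex.norm_lt_one_of_re_div_neg {μ : ℂ} (h : ((μ - 1) / (μ + 1)).re < 0) : ‖μ‖ < 1 := by
  -- `Re ((μ - 1) / (μ + 1)) = (‖μ‖² - 1) / ‖μ + 1‖²`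
  by_contra! h1
  have hsq : 1 ≤ μ.re ^ 2 + μ.im ^ 2 := by
    have := Complex.sq_norm μ
    rw [Complex.normSq_apply] at this
    nlinarith
  rw [Complex.div_re, ← add_div] at h
  refine h.not_ge (div_nonneg ?_ (Complex.normSq_nonneg _))
  simp only [Complex.sub_re, Complex.add_re, Complex.one_re, Complex.sub_im, Complex.add_im,
    Complex.one_im]
  nlinarith

end Cayley

section BanachAlgebra

variable {A : Type*}

lemma isUnit_one_sub_of_forall_re_neg [Ring A] [Algebra ℂ A] {f : A}
    (hf : ∀ μ ∈ spectrum ℂ f, μ.re < 0) : IsUnit (1 - f) := by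
  by_contra h
  have := hf 1 (by rwa [spectrum.mem_iff, map_one])
  norm_num at this

variable [NormedRing A] [NormedAlgebra ℂ A] [CompleteSpace A]

theorem tendsto_pow_of_forall_norm_lt_one {a : A} (ha : ∀ μ ∈ spectrum ℂ a, ‖μ‖ < 1) :
    Tendsto (a ^ ·) atTop (𝓝 0) := by
  nontriviality A
  have hρ : spectralRadius ℂ a < 1 := by
    simpa using spectrum.spectralRadius_lt_of_forall_lt a (r := 1) fun μ hμ => by
      simpa [← NNReal.coe_lt_coe] using ha μ hμ
  obtain ⟨r, hρr, hr1⟩ := ENNReal.lt_iff_exists_nnreal_btwn.mp hρ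
  have hbound : ∀ᶠ n : ℕ in atTop, ‖a ^ n‖ ≤ r ^ n := by
    filter_upwards [(spectrum.pow_nnnorm_pow_one_div_tendsto_nhds_spectralRadius a).eventually
      (gt_mem_nhds hρr), eventually_gt_atTop 0] with n hn hn0
    rw [one_div, ENNReal.rpow_inv_lt_iff (by positivity), ENNReal.rpow_natCast] at hn
    exact_mod_cast hn.le
  refine squeeze_zero_norm' hbound (tendsto_pow_atTop_nhds_zero_of_lt_one r.2 ?_)
  exact_mod_cast hr1

theorem tendsto_pow_cayley_of_forall_re_neg {f : A} (hf : ∀ μ ∈ spectrum ℂ f, μ.re < 0) :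
    Tendsto (cayley f ^ ·) atTop (𝓝 0) :=
  tendsto_pow_of_forall_norm_lt_one fun _ hμ => Complex.norm_lt_one_of_re_div_neg <|
    hf _ <| mem_spectrum_of_mem_spectrum_cayley (isUnit_one_sub_of_forall_re_neg hf) hμ

end BanachAlgebra

namespace Matrix

variable {ι : Type*} [Fintype ι]

def lyapunovMap {R : Type*} [CommSemiring R] [StarRing R] (F : Matrix ι ι R) :
    Matrix ι ι R →ₗ[R] Matrix ι ι R :=
  LinearMap.mulLeft R Fᴴ + LinearMap.mulRight R F

@[simp]
lemma lyapunovMap_apply {R : Type*} [CommSemiring R] [StarRing R] (F X : Matrix ι ι R) :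
    lyapunovMap F X = Fᴴ * X + X * F :=
  rfl

variable [DecidableEq ι]

lemma conjTranspose_cayley_mul_mul_cayley_sub {R : Type*} [CommRing R] [StarRing R]
    {F : Matrix ι ι R} (hF : IsUnit (1 - F)) (X : Matrix ι ι R) :
    (cayley F)ᴴ * X * cayley F - X =
      2 • ((Ring.inverse (1 - F))ᴴ * lyapunovMap F X * Ring.inverse (1 - F)) :=
  star_cayley_mul_mul_cayley_sub hF X

theorem tendsto_pow_cayley_of_forall_re_neg {F : Matrix ι ι ℂ}
    (hF : ∀ μ ∈ spectrum ℂ F, μ.re < 0) : Tendsto (cayley F ^ ·) atTop (𝓝 0) := by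
  open scoped Matrix.Norms.Operator in exact _root_.tendsto_pow_cayley_of_forall_re_neg hF

section Stein

lemma conjTranspose_pow_succ_mul_mul_pow_succ {R : Type*} [Semiring R] [StarRing R]
    (A X : Matrix ι ι R) (k : ℕ) :
    (A ^ (k + 1))ᴴ * X * A ^ (k + 1) = (A ^ k)ᴴ * (Aᴴ * X * A) * A ^ k := by
  simp only [pow_succ', conjTranspose_mul, mul_assoc]

variable {𝕜 : Type*} [RCLike 𝕜] {A : Matrix ι ι 𝕜}

lemma tendsto_conjTranspose_pow_mul_mul_pow (hA : Tendsto (A ^ ·) atTop (𝓝 0))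
    (X : Matrix ι ι 𝕜) : Tendsto (fun k : ℕ => (A ^ k)ᴴ * X * A ^ k) atTop (𝓝 0) :=
  ((continuous_id.matrix_conjTranspose.matrix_mul continuous_const).matrix_mul
    continuous_id |>.tendsto' 0 0 (by simp)).comp hA

lemma eq_zero_of_conjTranspose_mul_mul_eq_self (hA : Tendsto (A ^ ·) atTop (𝓝 0))
    {X : Matrix ι ι 𝕜} (hX : Aᴴ * X * A = X) : X = 0 := by
  have hk : ∀ k : ℕ, (A ^ k)ᴴ * X * A ^ k = X := by
    intro k
    induction k with
    | zero => simp
    | succ k ih => rw [conjTranspose_pow_succ_mul_mul_pow_succ, hX, ih]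
  exact tendsto_nhds_unique (tendsto_const_nhds.congr fun k => (hk k).symm)
    (tendsto_conjTranspose_pow_mul_mul_pow hA X)

theorem posDef_of_posDef_sub_conjTranspose_mul_mul (hA : Tendsto (A ^ ·) atTop (𝓝 0))
    {P : Matrix ι ι 𝕜} (hP : (P - Aᴴ * P * A).PosDef) : P.PosDef := by
  set R := P - Aᴴ * P * A
  have hR : Aᴴ * P * A = P - R := by simp [R]
  have hHerm : P.IsHermitian := by
    have hR' : Aᴴ * Pᴴ * A = Pᴴ - R := by
      simpa [conjTranspose_mul, mul_assoc, hP.1.eq] using congrArg conjTranspose hR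
    refine sub_eq_zero.mp (eq_zero_of_conjTranspose_mul_mul_eq_self hA ?_)
    rw [mul_sub, sub_mul, hR', hR]
    abel
  rw [posDef_iff_dotProduct_mulVec]
  refine ⟨hHerm, fun x hx => ?_⟩
  set v : ℕ → 𝕜 := fun k => star x ⬝ᵥ ((A ^ k)ᴴ * P * A ^ k) *ᵥ x
  have hv : Antitone v := antitone_nat_of_succ_le fun k => by
    simp only [v, conjTranspose_pow_succ_mul_mul_pow_succ, hR, mul_sub, sub_mul, sub_mulVec,
      dotProduct_sub]
    exact sub_le_self _ ((hP.posSemidef.conjTranspose_mul_mul_same _).dotProduct_mulVec_nonneg x)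
  have hv0 : Tendsto v atTop (𝓝 0) :=
    (continuous_const.dotProduct (continuous_id.matrix_mulVec continuous_const)
      |>.tendsto' 0 0 (by simp)).comp (tendsto_conjTranspose_pow_mul_mul_pow hA P)
  calc 0 < v 1 + star x ⬝ᵥ R *ᵥ x :=
        add_pos_of_nonneg_of_pos (hv.le_of_tendsto hv0 1) (hP.dotProduct_mulVec_pos hx)
    _ = star x ⬝ᵥ P *ᵥ x := by simp [v, hR, sub_mulVec]

end Stein

theorem lyapunovMap_injective {F : Matrix ι ι ℂ} (hF : ∀ μ ∈ spectrum ℂ F, μ.re < 0) :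
    Function.Injective (lyapunovMap F) := by
  refine (injective_iff_map_eq_zero _).mpr fun X hX => ?_
  refine eq_zero_of_conjTranspose_mul_mul_eq_self (tendsto_pow_cayley_of_forall_re_neg hF) ?_
  simpa [hX, sub_eq_zero] using
    conjTranspose_cayley_mul_mul_cayley_sub (isUnit_one_sub_of_forall_re_neg hF) X

end Matrix

/-- Lyapunov equation solvability: if every eigenvalue of `F`
has negative real part, then for every Hermitian positive definite `Q` there
exists a Hermitian positive definite `P` with `FᴴP + PF = -Q`. -/
theorem lyapunov_solvable {n : ℕ}
    (F : Matrix (Fin n) (Fin n) ℂ)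
    (hF : ∀ μ ∈ spectrum ℂ F, μ.re < 0) :
    ∀ Q : Matrix (Fin n) (Fin n) ℂ, Q.PosDef →
      ∃ P : Matrix (Fin n) (Fin n) ℂ, P.PosDef ∧ Fᴴ * P + P * F = -Q := by
  intro Q hQ
  have h1F : IsUnit (1 - F) := isUnit_one_sub_of_forall_re_neg hF
  obtain ⟨P, hP⟩ := LinearMap.injective_iff_surjective.mp (lyapunovMap_injective hF) (-Q)
  refine ⟨P, posDef_of_posDef_sub_conjTranspose_mul_mul
    (Matrix.tendsto_pow_cayley_of_forall_re_neg hF) ?_, hP⟩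
  have hB : Function.Injective (Ring.inverse (1 - F)).mulVec :=
    mulVec_injective_iff_isUnit.mpr h1F.ringInverse
  rw [← neg_sub, conjTranspose_cayley_mul_mul_cayley_sub h1F, hP, mul_neg, neg_mul, smul_neg,
    neg_neg]
  exact (hQ.conjTranspose_mul_mul_same hB).smul two_pos
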